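/- arXiv:1707.07476 — 11 statements merged into one kernel-verified Lean document; each statement's English description precedes it below -/
import Mathlib

section
/- Let Z be a real normed linear space and let K₁, K₂ ⊆ Z be nonempty cones (i.e., t·z ∈ Kᵢ whenever z ∈ Kᵢ and t > 0), and let ε ∈ (0,1). If vectors z₁, z₂ ∈ Z satisfy ‖z₁‖ + ‖z₂‖ = 1, ‖z₁ + z₂‖ < ε, z₁ ∈ K₁ and z₂ ∈ K₂, then there exist vectors ẑ₁, ẑ₂ ∈ Z such that ‖ẑ₁‖ + ‖ẑ₂‖ = 1, ẑ₁ + ẑ₂ = 0, d(ẑ₁, K₁) < ε/(2(1−ε)) and d(ẑ₂, K₂) < ε/(2(1−ε)). -/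
/-!
Put `v = z₁ - z₂`. Since `2 z₁ = (z₁ + z₂) + v` and `2 z₂ = (z₁ + z₂) - v`, the normalisation
`‖z₁‖ + ‖z₂‖ = 1` forces `‖v‖ > 1 - ε`. The opposite pair `±v / (2‖v‖)` then lies within
`‖z₁ + z₂‖ / (2‖v‖)` of the cone points `z₁ / ‖v‖` and `z₂ / ‖v‖` respectively.
-/

section

variable {E : Type*} [SeminormedAddCommGroup E] [NormedSpace ℝ E]

theorem norm_add_norm_le_norm_add_add_norm_sub (x y : E) :
    ‖x‖ + ‖y‖ ≤ ‖x + y‖ + ‖x - y‖ := by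
  have hx : ‖(2 : ℝ) • x‖ ≤ ‖x + y‖ + ‖x - y‖ := by
    rw [show (2 : ℝ) • x = (x + y) + (x - y) by rw [two_smul]; abel]
    exact norm_add_le _ _
  have hy : ‖(2 : ℝ) • y‖ ≤ ‖x + y‖ + ‖x - y‖ := by
    rw [show (2 : ℝ) • y = (x + y) - (x - y) by rw [two_smul]; abel]
    exact norm_sub_le _ _
  rw [norm_smul, Real.norm_two] at hx hy
  linarith

theorem dist_smul_sub_inv_norm_smul (x y : E) :
    dist ((2 * ‖x - y‖)⁻¹ • (x - y)) (‖x - y‖⁻¹ • x) = ‖x + y‖ / (2 * ‖x - y‖) := by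
  have hx : ‖x - y‖⁻¹ • x = (2 * ‖x - y‖)⁻¹ • (2 : ℝ) • x := by
    rw [smul_smul, mul_inv, mul_comm (2 : ℝ)⁻¹, mul_assoc, inv_mul_cancel₀ two_ne_zero, mul_one]
  rw [dist_eq_norm, hx, ← smul_sub, two_smul, norm_smul, Real.norm_of_nonneg (by positivity),
    show x - y - (x + x) = -(x + y) by abel, norm_neg, inv_mul_eq_div]

end

theorem stmt_0_general {Z : Type*} [NormedAddCommGroup Z] [NormedSpace ℝ Z]
    (K₁ K₂ : Set Z)
    (hcone₁ : ∀ z ∈ K₁, ∀ t : ℝ, 0 < t → t • z ∈ K₁)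
    (hcone₂ : ∀ z ∈ K₂, ∀ t : ℝ, 0 < t → t • z ∈ K₂)
    (ε : ℝ) (hε1 : ε < 1)
    (z₁ z₂ : Z) (hnorm : ‖z₁‖ + ‖z₂‖ = 1) (hsum : ‖z₁ + z₂‖ < ε)
    (hz₁ : z₁ ∈ K₁) (hz₂ : z₂ ∈ K₂) :
    ∃ w₁ w₂ : Z, ‖w₁‖ + ‖w₂‖ = 1 ∧ w₁ + w₂ = 0 ∧
      Metric.infDist w₁ K₁ < ε / (2 * (1 - ε)) ∧
      Metric.infDist w₂ K₂ < ε / (2 * (1 - ε)) := by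
  have hv : 1 - ε < ‖z₁ - z₂‖ := by
    linarith [norm_add_norm_le_norm_add_add_norm_sub z₁ z₂]
  have hv0 : 0 < ‖z₁ - z₂‖ := by linarith
  have hbound : ‖z₁ + z₂‖ / (2 * ‖z₁ - z₂‖) < ε / (2 * (1 - ε)) :=
    calc ‖z₁ + z₂‖ / (2 * ‖z₁ - z₂‖) < ε / (2 * ‖z₁ - z₂‖) := by gcongr
      _ ≤ ε / (2 * (1 - ε)) :=
        div_le_div_of_nonneg_left (by linarith [norm_nonneg (z₁ + z₂)]) (by linarith) (by linarith)
  refine ⟨(2 * ‖z₁ - z₂‖)⁻¹ • (z₁ - z₂), (2 * ‖z₂ - z₁‖)⁻¹ • (z₂ - z₁), ?_, ?_, ?_, ?_⟩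
  · rw [norm_sub_rev z₂, norm_smul, norm_smul, norm_sub_rev z₂, Real.norm_of_nonneg (by positivity)]
    field_simp
    ring
  · rw [norm_sub_rev z₂, ← smul_add, sub_add_sub_cancel, sub_self, smul_zero]
  · refine (Metric.infDist_le_dist_of_mem (hcone₁ z₁ hz₁ _ (inv_pos.2 hv0))).trans_lt ?_
    rwa [dist_smul_sub_inv_norm_smul]
  · refine (Metric.infDist_le_dist_of_mem (hcone₂ z₂ hz₂ _ (inv_pos.2 hv0))).trans_lt ?_
    rwa [← norm_sub_rev z₂, dist_smul_sub_inv_norm_smul, add_comm, norm_sub_rev z₂]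

/-- Lemma 1(i): conversion from near-normal pairs with small sum to exactly opposite
pairs near the cones. -/
theorem stmt_0 {Z : Type*} [NormedAddCommGroup Z] [NormedSpace ℝ Z]
    (K₁ K₂ : Set Z) (hK₁ : K₁.Nonempty) (hK₂ : K₂.Nonempty)
    (hcone₁ : ∀ z ∈ K₁, ∀ t : ℝ, 0 < t → t • z ∈ K₁)
    (hcone₂ : ∀ z ∈ K₂, ∀ t : ℝ, 0 < t → t • z ∈ K₂)
    (ε : ℝ) (hε0 : 0 < ε) (hε1 : ε < 1)
    (z₁ z₂ : Z) (hnorm : ‖z₁‖ + ‖z₂‖ = 1) (hsum : ‖z₁ + z₂‖ < ε)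
    (hz₁ : z₁ ∈ K₁) (hz₂ : z₂ ∈ K₂) :
    ∃ w₁ w₂ : Z, ‖w₁‖ + ‖w₂‖ = 1 ∧ w₁ + w₂ = 0 ∧
      Metric.infDist w₁ K₁ < ε / (2 * (1 - ε)) ∧
      Metric.infDist w₂ K₂ < ε / (2 * (1 - ε)) :=
  stmt_0_general K₁ K₂ hcone₁ hcone₂ ε hε1 z₁ z₂ hnorm hsum hz₁ hz₂
end

section
/- Let Z be a real normed linear space and let K₁, K₂ ⊆ Z be nonempty cones (i.e., t·z ∈ Kᵢ whenever z ∈ Kᵢ and t > 0), and let ε ∈ (0,1). If vectors z₁, z₂ ∈ Z satisfy ‖z₁‖ + ‖z₂‖ = 1, z₁ + z₂ = 0 and d(z₁, K₁) + d(z₂, K₂) < ε, then there exist vectors ẑ₁ ∈ K₁ and ẑ₂ ∈ K₂ such that ‖ẑ₁‖ + ‖ẑ₂‖ = 1 and ‖ẑ₁ + ẑ₂‖ < ε/(1−ε). -/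
/-! Pick `kᵢ ∈ Kᵢ` with `‖z₁ - k₁‖ + ‖z₂ - k₂‖ < ε`. Since `z₁ + z₂ = 0` this gives
`‖k₁ + k₂‖ < ε`, while `‖k₁‖ + ‖k₂‖ > 1 - ε`; rescaling both points by `(‖k₁‖ + ‖k₂‖)⁻¹`
keeps them in the cones and yields the bound `ε / (1 - ε)`. -/

open Metric

theorem exists_mem_norm_sub_add_norm_sub_lt {Z : Type*} [SeminormedAddCommGroup Z]
    {K₁ K₂ : Set Z} (hK₁ : K₁.Nonempty) (hK₂ : K₂.Nonempty) {z₁ z₂ : Z} {ε : ℝ}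
    (h : infDist z₁ K₁ + infDist z₂ K₂ < ε) :
    ∃ k₁ ∈ K₁, ∃ k₂ ∈ K₂, ‖z₁ - k₁‖ + ‖z₂ - k₂‖ < ε := by
  obtain ⟨k₁, hk₁, hd₁⟩ := (infDist_lt_iff hK₁).mp (lt_sub_iff_add_lt.mpr h)
  obtain ⟨k₂, hk₂, hd₂⟩ := (infDist_lt_iff hK₂).mp (lt_sub_comm.mp hd₁)
  simp only [dist_eq_norm] at hd₁ hd₂
  exact ⟨k₁, hk₁, k₂, hk₂, by linarith⟩

theorem exists_smul_mem_norm_add_norm_eq_one {Z : Type*} [SeminormedAddCommGroup Z]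
    [NormedSpace ℝ Z] {K₁ K₂ : Set Z}
    (hcone₁ : ∀ z ∈ K₁, ∀ t : ℝ, 0 < t → t • z ∈ K₁)
    (hcone₂ : ∀ z ∈ K₂, ∀ t : ℝ, 0 < t → t • z ∈ K₂)
    {k₁ k₂ : Z} (hk₁ : k₁ ∈ K₁) (hk₂ : k₂ ∈ K₂) (hk : 0 < ‖k₁‖ + ‖k₂‖) :
    ∃ w₁ ∈ K₁, ∃ w₂ ∈ K₂, ‖w₁‖ + ‖w₂‖ = 1 ∧
      ‖w₁ + w₂‖ = ‖k₁ + k₂‖ / (‖k₁‖ + ‖k₂‖) := by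
  have ht : 0 < (‖k₁‖ + ‖k₂‖)⁻¹ := inv_pos.mpr hk
  refine ⟨_, hcone₁ k₁ hk₁ _ ht, _, hcone₂ k₂ hk₂ _ ht, ?_, ?_⟩
  · rw [norm_smul, norm_smul, Real.norm_of_nonneg ht.le, ← mul_add, inv_mul_cancel₀ hk.ne']
  · rw [← smul_add, norm_smul, Real.norm_of_nonneg ht.le, inv_mul_eq_div]

theorem stmt_1_general {Z : Type*} [NormedAddCommGroup Z] [NormedSpace ℝ Z]
    (K₁ K₂ : Set Z) (hK₁ : K₁.Nonempty) (hK₂ : K₂.Nonempty)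
    (hcone₁ : ∀ z ∈ K₁, ∀ t : ℝ, 0 < t → t • z ∈ K₁)
    (hcone₂ : ∀ z ∈ K₂, ∀ t : ℝ, 0 < t → t • z ∈ K₂)
    (ε : ℝ) (hε1 : ε < 1)
    (z₁ z₂ : Z) (hnorm : ‖z₁‖ + ‖z₂‖ = 1) (hsum : z₁ + z₂ = 0)
    (hdist : Metric.infDist z₁ K₁ + Metric.infDist z₂ K₂ < ε) :
    ∃ w₁ ∈ K₁, ∃ w₂ ∈ K₂, ‖w₁‖ + ‖w₂‖ = 1 ∧ ‖w₁ + w₂‖ < ε / (1 - ε) := by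
  have hε0 : 0 < ε := by
    linarith [infDist_nonneg (x := z₁) (s := K₁), infDist_nonneg (x := z₂) (s := K₂)]
  obtain ⟨k₁, hk₁, k₂, hk₂, hk⟩ := exists_mem_norm_sub_add_norm_sub_lt hK₁ hK₂ hdist
  have hk_add : ‖k₁ + k₂‖ < ε := by
    have : k₁ + k₂ = -((z₁ - k₁) + (z₂ - k₂)) := by
      rw [eq_neg_of_add_eq_zero_right hsum]; abel
    rw [this, norm_neg]
    exact (norm_add_le _ _).trans_lt hk
  have hk_norm : 1 - ε < ‖k₁‖ + ‖k₂‖ := by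
    linarith [norm_sub_norm_le z₁ k₁, norm_sub_norm_le z₂ k₂]
  obtain ⟨w₁, hw₁, w₂, hw₂, hw_norm, hw_add⟩ :=
    exists_smul_mem_norm_add_norm_eq_one hcone₁ hcone₂ hk₁ hk₂ (by linarith)
  refine ⟨w₁, hw₁, w₂, hw₂, hw_norm, ?_⟩
  calc ‖w₁ + w₂‖ = ‖k₁ + k₂‖ / (‖k₁‖ + ‖k₂‖) := hw_add
    _ < ε / (‖k₁‖ + ‖k₂‖) := div_lt_div_of_pos_right hk_add (by linarith)
    _ ≤ ε / (1 - ε) := div_le_div_of_nonneg_left hε0.le (by linarith) hk_norm.le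

/-- Lemma 1(ii): conversion from exactly opposite pairs near the cones to pairs in
the cones with small sum. -/
theorem stmt_1 {Z : Type*} [NormedAddCommGroup Z] [NormedSpace ℝ Z]
    (K₁ K₂ : Set Z) (hK₁ : K₁.Nonempty) (hK₂ : K₂.Nonempty)
    (hcone₁ : ∀ z ∈ K₁, ∀ t : ℝ, 0 < t → t • z ∈ K₁)
    (hcone₂ : ∀ z ∈ K₂, ∀ t : ℝ, 0 < t → t • z ∈ K₂)
    (ε : ℝ) (hε0 : 0 < ε) (hε1 : ε < 1)
    (z₁ z₂ : Z) (hnorm : ‖z₁‖ + ‖z₂‖ = 1) (hsum : z₁ + z₂ = 0)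
    (hdist : Metric.infDist z₁ K₁ + Metric.infDist z₂ K₂ < ε) :
    ∃ w₁ ∈ K₁, ∃ w₂ ∈ K₂, ‖w₁‖ + ‖w₂‖ = 1 ∧ ‖w₁ + w₂‖ < ε / (1 - ε) :=
  stmt_1_general K₁ K₂ hK₁ hK₂ hcone₁ hcone₂ ε hε1 z₁ z₂ hnorm hsum hdist
end

section
/- Let X be a real normed linear space, A, B ⊆ X nonempty, and x̄ ∈ A ∩ B. Then the following two conditions are equivalent: (i) for every ε > 0 there exist points a ∈ A ∩ B_ε(x̄), b ∈ B ∩ B_ε(x̄) and a functional a* in the continuous dual X* such that ‖a*‖ = 1, d(a*, N_A(a)) < ε and d(−a*, N_B(b)) < ε; (ii) for every ε > 0 there exist points a ∈ A ∩ B_ε(x̄), b ∈ B ∩ B_ε(x̄) and functionals a* ∈ N_A(a), b* ∈ N_B(b) such that ‖a*‖ + ‖b*‖ = 1 and ‖a* + b*‖ < ε. -/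
open Metric

/-!
Both conditions only use that normal cones are nonempty and closed under positive scaling.
From (i), pick `u ∈ N_A(a)`, `v ∈ N_B(b)` close to `a*` and `-a*`: then `‖u + v‖` is small while
`‖u‖ + ‖v‖ ≈ 2`, and dividing by `‖u‖ + ‖v‖` gives (ii). From (ii), one of `‖a*‖`, `‖b*‖` is at
least `1/2`, say `‖a*‖`; then `a* / ‖a*‖` lies in `N_A(a)` and its negative is within
`‖a* + b*‖ / ‖a*‖ ≤ 2 ‖a* + b*‖` of `b* / ‖a*‖ ∈ N_B(b)`.
-/

/-- The Fréchet normal cone to `A` at `a`, as a subset of the continuous dual. -/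
def frechetNormalCone {X : Type*} [NormedAddCommGroup X] [NormedSpace ℝ X]
    (A : Set X) (a : X) : Set (StrongDual ℝ X) :=
  {x' | ∀ ε > (0 : ℝ), ∃ δ > (0 : ℝ), ∀ x ∈ A, 0 < ‖x - a‖ → ‖x - a‖ < δ →
    x' (x - a) ≤ ε * ‖x - a‖}

section PositiveCone

variable {E : Type*} [NormedAddCommGroup E] [NormedSpace ℝ E] {K L : Set E}

lemma exists_norm_add_norm_eq_one_of_one_le
    (hK : ∀ x ∈ K, ∀ t : ℝ, 0 < t → t • x ∈ K) (hL : ∀ x ∈ L, ∀ t : ℝ, 0 < t → t • x ∈ L)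
    {u v : E} (hu : u ∈ K) (hv : v ∈ L) (h1 : 1 ≤ ‖u‖ + ‖v‖) :
    ∃ u' ∈ K, ∃ v' ∈ L, ‖u'‖ + ‖v'‖ = 1 ∧ ‖u' + v'‖ ≤ ‖u + v‖ := by
  set s := ‖u‖ + ‖v‖
  have hs : 0 < s := by linarith
  refine ⟨s⁻¹ • u, hK u hu _ (inv_pos.2 hs), s⁻¹ • v, hL v hv _ (inv_pos.2 hs), ?_, ?_⟩
  · rw [norm_smul, norm_smul, Real.norm_of_nonneg (inv_nonneg.2 hs.le), ← mul_add,
      inv_mul_cancel₀ hs.ne']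
  · rw [← smul_add, norm_smul, Real.norm_of_nonneg (inv_nonneg.2 hs.le)]
    exact mul_le_of_le_one_left (norm_nonneg _) (inv_le_one_of_one_le₀ h1)

lemma exists_norm_add_norm_eq_one_of_infDist_lt
    (hK : ∀ x ∈ K, ∀ t : ℝ, 0 < t → t • x ∈ K) (hL : ∀ x ∈ L, ∀ t : ℝ, 0 < t → t • x ∈ L)
    (hKne : K.Nonempty) (hLne : L.Nonempty) {c : E} (hc : ‖c‖ = 1) {δ : ℝ} (hδ : δ ≤ 1 / 2)
    (hcK : infDist c K < δ) (hcL : infDist (-c) L < δ) :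
    ∃ u ∈ K, ∃ v ∈ L, ‖u‖ + ‖v‖ = 1 ∧ ‖u + v‖ < 2 * δ := by
  obtain ⟨u, hu, hcu⟩ := (infDist_lt_iff hKne).1 hcK
  obtain ⟨v, hv, hcv⟩ := (infDist_lt_iff hLne).1 hcL
  rw [dist_eq_norm] at hcu hcv
  have hnorm_u : 1 - δ < ‖u‖ := by
    have := norm_sub_norm_le c (c - u)
    rw [sub_sub_cancel] at this
    linarith
  have hnorm_v : 1 - δ < ‖v‖ := by
    have := norm_sub_norm_le (-c) (-c - v)
    rw [sub_sub_cancel, norm_neg] at this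
    linarith
  have hsum : ‖u + v‖ < 2 * δ :=
    calc ‖u + v‖ = ‖-((c - u) + (-c - v))‖ := by congr 1; abel
      _ ≤ ‖c - u‖ + ‖-c - v‖ := (norm_neg _).trans_le (norm_add_le _ _)
      _ < 2 * δ := by linarith
  obtain ⟨u', hu', v', hv', h1, huv'⟩ :=
    exists_norm_add_norm_eq_one_of_one_le hK hL hu hv (by linarith)
  exact ⟨u', hu', v', hv', h1, huv'.trans_lt hsum⟩

lemma exists_unit_infDist_le_of_half_le_norm
    (hK : ∀ x ∈ K, ∀ t : ℝ, 0 < t → t • x ∈ K) (hL : ∀ x ∈ L, ∀ t : ℝ, 0 < t → t • x ∈ L)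
    {u v : E} (hu : u ∈ K) (hv : v ∈ L) (hu2 : 1 / 2 ≤ ‖u‖) :
    ∃ c : E, ‖c‖ = 1 ∧ infDist c K = 0 ∧ infDist (-c) L ≤ 2 * ‖u + v‖ := by
  have hpos : 0 < ‖u‖ := by linarith
  refine ⟨‖u‖⁻¹ • u, ?_, infDist_zero_of_mem (hK u hu _ (inv_pos.2 hpos)), ?_⟩
  · rw [norm_smul, norm_inv, norm_norm, inv_mul_cancel₀ hpos.ne']
  calc infDist (-(‖u‖⁻¹ • u)) L ≤ dist (-(‖u‖⁻¹ • u)) (‖u‖⁻¹ • v) :=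
        infDist_le_dist_of_mem (hL v hv _ (inv_pos.2 hpos))
    _ = ‖u‖⁻¹ * ‖u + v‖ := by
        rw [dist_eq_norm, ← neg_add', ← smul_add, norm_neg, norm_smul, norm_inv, norm_norm]
    _ ≤ 2 * ‖u + v‖ := by
        gcongr
        rw [inv_le_comm₀ hpos two_pos]
        linarith

lemma exists_unit_infDist_le_of_norm_add_norm_eq_one
    (hK : ∀ x ∈ K, ∀ t : ℝ, 0 < t → t • x ∈ K) (hL : ∀ x ∈ L, ∀ t : ℝ, 0 < t → t • x ∈ L)
    {u v : E} (hu : u ∈ K) (hv : v ∈ L) (h1 : ‖u‖ + ‖v‖ = 1) :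
    ∃ c : E, ‖c‖ = 1 ∧ infDist c K ≤ 2 * ‖u + v‖ ∧ infDist (-c) L ≤ 2 * ‖u + v‖ := by
  rcases le_total (1 / 2) ‖u‖ with hu2 | hu2
  · obtain ⟨c, hc, hcK, hcL⟩ := exists_unit_infDist_le_of_half_le_norm hK hL hu hv hu2
    exact ⟨c, hc, hcK.trans_le (by positivity), hcL⟩
  · obtain ⟨c, hc, hcL, hcK⟩ :=
      exists_unit_infDist_le_of_half_le_norm hL hK hv hu (by linarith)
    refine ⟨-c, by rwa [norm_neg], ?_, ?_⟩
    · rwa [add_comm v] at hcK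
    · rw [neg_neg, hcL]
      positivity

end PositiveCone

section FrechetNormalCone

variable {X : Type*} [NormedAddCommGroup X] [NormedSpace ℝ X]

lemma zero_mem_frechetNormalCone (A : Set X) (a : X) :
    (0 : StrongDual ℝ X) ∈ frechetNormalCone A a :=
  fun ε hε => ⟨1, one_pos, fun x _ hx _ => by simpa using by positivity⟩

lemma smul_mem_frechetNormalCone {A : Set X} {a : X} {x' : StrongDual ℝ X}
    (hx' : x' ∈ frechetNormalCone A a) {t : ℝ} (ht : 0 < t) :
    t • x' ∈ frechetNormalCone A a := by
  intro ε hε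
  obtain ⟨δ, hδ, hx'δ⟩ := hx' (ε / t) (by positivity)
  refine ⟨δ, hδ, fun x hx h0 hδx => ?_⟩
  calc (t • x') (x - a) = t * x' (x - a) := rfl
    _ ≤ t * (ε / t * ‖x - a‖) := by gcongr; exact hx'δ x hx h0 hδx
    _ = ε * ‖x - a‖ := by field_simp

end FrechetNormalCone

theorem stmt_3_general {X : Type*} [NormedAddCommGroup X] [NormedSpace ℝ X]
    (A B : Set X)
    (xb : X) :
    ((∀ ε > (0 : ℝ), ∃ a ∈ A ∩ ball xb ε, ∃ b ∈ B ∩ ball xb ε,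
        ∃ a' : StrongDual ℝ X, ‖a'‖ = 1 ∧
          Metric.infDist a' (frechetNormalCone A a) < ε ∧
          Metric.infDist (-a') (frechetNormalCone B b) < ε) ↔
      (∀ ε > (0 : ℝ), ∃ a ∈ A ∩ ball xb ε, ∃ b ∈ B ∩ ball xb ε,
        ∃ a' ∈ frechetNormalCone A a, ∃ b' ∈ frechetNormalCone B b,
          ‖a'‖ + ‖b'‖ = 1 ∧ ‖a' + b'‖ < ε)) := by
  have shrink {S : Set X} {r ε : ℝ} (h : r ≤ ε) : S ∩ ball xb r ⊆ S ∩ ball xb ε :=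
    Set.inter_subset_inter_right S (ball_subset_ball h)
  have cone (S : Set X) (s : X) :
      ∀ x ∈ frechetNormalCone S s, ∀ t : ℝ, 0 < t → t • x ∈ frechetNormalCone S s :=
    fun _ hx _ ht => smul_mem_frechetNormalCone hx ht
  constructor
  · intro H ε hε
    have hmin : min ε 1 ≤ ε ∧ min ε 1 ≤ 1 := ⟨min_le_left ε 1, min_le_right ε 1⟩
    obtain ⟨a, ha, b, hb, c, hc, hcA, hcB⟩ := H (min ε 1 / 2) (by positivity)
    obtain ⟨u, hu, v, hv, h1, huv⟩ := exists_norm_add_norm_eq_one_of_infDist_lt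
      (cone A a) (cone B b) ⟨0, zero_mem_frechetNormalCone A a⟩
      ⟨0, zero_mem_frechetNormalCone B b⟩ hc (by linarith) hcA hcB
    exact ⟨a, shrink (by linarith) ha, b, shrink (by linarith) hb, u, hu, v, hv, h1,
      by linarith⟩
  · intro H ε hε
    obtain ⟨a, ha, b, hb, u, hu, v, hv, h1, huv⟩ := H (ε / 2) (by positivity)
    obtain ⟨c, hc, hcA, hcB⟩ :=
      exists_unit_infDist_le_of_norm_add_norm_eq_one (cone A a) (cone B b) hu hv h1
    exact ⟨a, shrink (by linarith) ha, b, shrink (by linarith) hb, c, hc, by linarith,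
      by linarith⟩

/-- Equivalence of the two generalized separation conditions in the extremal principle. -/
theorem stmt_3 {X : Type*} [NormedAddCommGroup X] [NormedSpace ℝ X]
    (A B : Set X) (hAne : A.Nonempty) (hBne : B.Nonempty)
    (xb : X) (hxb : xb ∈ A ∩ B) :
    ((∀ ε > (0 : ℝ), ∃ a ∈ A ∩ ball xb ε, ∃ b ∈ B ∩ ball xb ε,
        ∃ a' : StrongDual ℝ X, ‖a'‖ = 1 ∧
          Metric.infDist a' (frechetNormalCone A a) < ε ∧
          Metric.infDist (-a') (frechetNormalCone B b) < ε) ↔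
      (∀ ε > (0 : ℝ), ∃ a ∈ A ∩ ball xb ε, ∃ b ∈ B ∩ ball xb ε,
        ∃ a' ∈ frechetNormalCone A a, ∃ b' ∈ frechetNormalCone B b,
          ‖a'‖ + ‖b'‖ = 1 ∧ ‖a' + b'‖ < ε)) :=
  stmt_3_general A B xb
end

section
/- Let X be a real normed linear space, A, B ⊆ X nonempty with A ∩ B = ∅, and let ε > 0. If points a ∈ A and b ∈ B satisfy ‖a − b‖ < d(A,B) + ε, then there exist u, v ∈ X such that ‖u‖ = ‖v‖ < ε/2 and (A − a − u) ∩ (B − b − v) = ∅. -/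
/-- The distance between two sets: `inf {‖x − y‖ : x ∈ A, y ∈ B}`. -/
noncomputable def setDist {X : Type*} [NormedAddCommGroup X] (A B : Set X) : ℝ :=
  sInf {d : ℝ | ∃ a ∈ A, ∃ b ∈ B, d = ‖a - b‖}

/-- Proposition 4.1: a near-minimizing pair of points admits small equal-norm shifts
separating the translated sets. -/
theorem stmt_6 {X : Type*} [NormedAddCommGroup X] [NormedSpace ℝ X]
    (A B : Set X) (hAne : A.Nonempty) (hBne : B.Nonempty) (hAB : A ∩ B = ∅)
    (ε : ℝ) (hε : 0 < ε) (a : X) (ha : a ∈ A) (b : X) (hb : b ∈ B)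
    (hab : ‖a - b‖ < setDist A B + ε) :
    ∃ u v : X, ‖u‖ = ‖v‖ ∧ ‖v‖ < ε / 2 ∧
      ((fun x => x - a - u) '' A) ∩ ((fun x => x - b - v) '' B) = ∅ := by
  set d := setDist A B with hd
  set n := ‖a - b‖ with hn
  have hbdd : BddBelow {r : ℝ | ∃ x ∈ A, ∃ y ∈ B, r = ‖x - y‖} := by
    refine ⟨0, ?_⟩
    rintro r ⟨x, _, y, _, rfl⟩
    exact norm_nonneg _
  have hdle : ∀ x ∈ A, ∀ y ∈ B, d ≤ ‖x - y‖ := fun x hx y hy =>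
    csInf_le hbdd ⟨x, hx, y, hy, rfl⟩
  have hdab : d ≤ n := hdle a ha b hb
  have hane : a ≠ b := by
    intro h
    have : a ∈ A ∩ B := ⟨ha, h ▸ hb⟩
    simp [hAB] at this
  have hnpos : 0 < n := by
    rw [hn]
    exact norm_sub_pos_iff.mpr hane
  set s : ℝ := min ((n - d + ε) / 4) (n / 2) with hs
  have hs_pos : 0 < s := by
    apply lt_min <;> linarith
  have hs_lt : s < ε / 2 := by
    calc s ≤ (n - d + ε) / 4 := min_le_left _ _
    _ < ε / 2 := by linarith
  have hs_le_n : 2 * s ≤ n := by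
    have := min_le_right ((n - d + ε) / 4) (n / 2)
    linarith [this]
  set t : ℝ := s / n with ht
  have htn : t * n = s := div_mul_cancel₀ s (ne_of_gt hnpos)
  refine ⟨t • (b - a), t • (a - b), ?_, ?_, ?_⟩
  · rw [show b - a = -(a - b) by abel, smul_neg, norm_neg]
  · rw [norm_smul, Real.norm_eq_abs, abs_of_nonneg (div_nonneg hs_pos.le hnpos.le),
      ← hn, htn]
    exact hs_lt
  · rw [Set.eq_empty_iff_forall_notMem]
    rintro z ⟨⟨x, hx, hxz⟩, ⟨y, hy, hyz⟩⟩
    simp only at hxz hyz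
    have hxy : x - y = (1 - 2 * t) • (a - b) := by
      have h := hxz.trans hyz.symm
      linear_combination (norm := module) h
    have hxynorm : ‖x - y‖ = n - 2 * s := by
      rw [hxy, norm_smul, Real.norm_eq_abs, ← hn]
      have h1 : 2 * t ≤ 1 := by
        rw [ht, show (2:ℝ) * (s / n) = 2 * s / n by ring, div_le_one hnpos]
        exact hs_le_n
      rw [abs_of_nonneg (by linarith : (0:ℝ) ≤ 1 - 2 * t)]
      have : (1 - 2 * t) * n = n - 2 * (t * n) := by ring
      rw [this, htn]
    rcases le_or_gt (n / 2) ((n - d + ε) / 4) with hc | hc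
    · -- s = n/2, so x = y
      have hseq : s = n / 2 := min_eq_right hc
      have : ‖x - y‖ = 0 := by rw [hxynorm, hseq]; ring
      have hxey : x = y := by
        rwa [norm_eq_zero, sub_eq_zero] at this
      have : x ∈ A ∩ B := ⟨hx, hxey ▸ hy⟩
      simp [hAB] at this
    · -- s = (n-d+ε)/4, so ‖x-y‖ < d
      have hseq : s = (n - d + ε) / 4 := min_eq_left hc.le
      have hlt : ‖x - y‖ < d := by
        rw [hxynorm, hseq]
        linarith
      exact absurd (hdle x hx y hy) (not_le.mpr hlt)
end

section
/- Let X be a real normed linear space and A, B ⊆ X nonempty with A ∩ B = ∅. If sequences (a_k) ⊆ A and (b_k) ⊆ B satisfy ‖a_k − b_k‖ → d(A,B), then there exist sequences (u_k), (v_k) ⊆ X converging to 0 such that (A − a_k − u_k) ∩ (B − b_k − v_k) = ∅ for every k. -/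
/-!
Put `r_k = a_k - b_k ≠ 0` and `d = setDist A B`. The two translated sets meet exactly when the
total shift `r_k + u_k - v_k` is a difference of a point of `A` and a point of `B`, and no such
difference has norm below `d`, nor is it `0`. So take `v_k = 0` and rescale `r_k` to the vector
`c_k` of norm `k/(k+1) · d`, which is either shorter than `d` or (when `d = 0`) equal to `0`;
the correction `u_k = c_k - r_k` has norm `|k/(k+1) · d - ‖r_k‖| → 0`.
-/

open Filter

open Set Topology Pointwise

section SetDist

variable {X : Type*} [NormedAddCommGroup X] {A B : Set X}

theorem setDist_nonneg (A B : Set X) : 0 ≤ setDist A B :=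
  Real.sInf_nonneg (by rintro _ ⟨a, -, b, -, rfl⟩; exact norm_nonneg _)

theorem setDist_le_norm_of_mem_sub {w : X} (hw : w ∈ A - B) : setDist A B ≤ ‖w‖ := by
  obtain ⟨a, ha, b, hb, rfl⟩ := hw
  exact csInf_le ⟨0, by rintro _ ⟨a, -, b, -, rfl⟩; exact norm_nonneg _⟩ ⟨a, ha, b, hb, rfl⟩

theorem notMem_sub_of_norm_le_mul_setDist (hAB : Disjoint A B) {t : ℝ} (ht : t < 1) {w : X}
    (hw : ‖w‖ ≤ t * setDist A B) : w ∉ A - B := by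
  intro hmem
  have hle := setDist_le_norm_of_mem_sub hmem
  have hd : setDist A B = 0 := by nlinarith [setDist_nonneg A B]
  have hw0 : w = 0 := norm_le_zero_iff.mp (by simpa [hd] using hw)
  exact hAB.zero_notMem_sub_set (hw0 ▸ hmem)

theorem image_sub_inter_image_sub_eq_empty {p q u v : X} (h : p + u - (q + v) ∉ A - B) :
    (fun x => x - p - u) '' A ∩ (fun x => x - q - v) '' B = ∅ := by
  rw [eq_empty_iff_forall_notMem]
  rintro _ ⟨⟨x, hx, rfl⟩, ⟨y, hy, hxy⟩⟩
  refine h ⟨x, hx, y, hy, ?_⟩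
  simp only at hxy
  calc x - y = (x - p - u) - (y - q - v) + (p + u - (q + v)) := by abel
    _ = p + u - (q + v) := by rw [hxy, sub_self, zero_add]

end SetDist

section Rescale

variable {E : Type*} [NormedAddCommGroup E] [NormedSpace ℝ E]

theorem norm_div_norm_smul (s : ℝ) {r : E} (hr : r ≠ 0) : ‖(s / ‖r‖) • r‖ = |s| := by
  rw [norm_smul, Real.norm_eq_abs, abs_div, abs_norm, div_mul_cancel₀ _ (norm_ne_zero_iff.mpr hr)]

theorem norm_div_norm_smul_sub_self (s : ℝ) {r : E} (hr : r ≠ 0) :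
    ‖(s / ‖r‖) • r - r‖ = |s - ‖r‖| := by
  have hsplit : (s / ‖r‖) • r - r = ((s - ‖r‖) / ‖r‖) • r := by
    rw [sub_div, div_self (norm_ne_zero_iff.mpr hr), sub_smul, one_smul]
  rw [hsplit, norm_div_norm_smul _ hr]

theorem tendsto_div_norm_smul_sub_self {ι : Type*} {l : Filter ι} {r : ι → E} {s : ι → ℝ}
    {d : ℝ} (hr : ∀ i, r i ≠ 0) (hrd : Tendsto (fun i => ‖r i‖) l (𝓝 d))
    (hsd : Tendsto s l (𝓝 d)) : Tendsto (fun i => (s i / ‖r i‖) • r i - r i) l (𝓝 0) := by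
  rw [tendsto_zero_iff_norm_tendsto_zero]
  simp_rw [norm_div_norm_smul_sub_self _ (hr _)]
  simpa using (hsd.sub hrd).abs

end Rescale

theorem stmt_7_general {X : Type*} [NormedAddCommGroup X] [NormedSpace ℝ X]
    (A B : Set X) (hAB : A ∩ B = ∅)
    (a : ℕ → X) (b : ℕ → X) (ha : ∀ k, a k ∈ A) (hb : ∀ k, b k ∈ B)
    (hconv : Tendsto (fun k => ‖a k - b k‖) atTop (nhds (setDist A B))) :
    ∃ u v : ℕ → X, Tendsto u atTop (nhds (0 : X)) ∧ Tendsto v atTop (nhds (0 : X)) ∧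
      ∀ k, ((fun x => x - a k - u k) '' A) ∩ ((fun x => x - b k - v k) '' B) = ∅ := by
  have hdisj : Disjoint A B := disjoint_iff_inter_eq_empty.mpr hAB
  have hne : ∀ k, a k - b k ≠ 0 := fun k h =>
    disjoint_left.mp hdisj (ha k) (sub_eq_zero.mp h ▸ hb k)
  set d := setDist A B
  let t : ℕ → ℝ := fun k => k / (k + 1)
  have ht : Tendsto t atTop (𝓝 1) := tendsto_natCast_div_add_atTop 1
  let c : ℕ → X := fun k => (t k * d / ‖a k - b k‖) • (a k - b k)
  refine ⟨fun k => c k - (a k - b k), 0,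
    tendsto_div_norm_smul_sub_self hne hconv (by simpa using ht.mul_const d),
    tendsto_const_nhds, fun k => image_sub_inter_image_sub_eq_empty ?_⟩
  have hshift : a k + (c k - (a k - b k)) - (b k + (0 : ℕ → X) k) = c k := by
    rw [Pi.zero_apply]; abel
  rw [hshift]
  refine notMem_sub_of_norm_le_mul_setDist hdisj (t := t k) ?_ ?_
  · exact (div_lt_one (by positivity)).mpr (lt_add_one _)
  · rw [norm_div_norm_smul _ (hne k), abs_of_nonneg (by positivity [setDist_nonneg A B])]

/-- Corollary 3.3: along a distance-minimizing sequence of pairs of points there exist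
shifts converging to zero that separate the translated sets. -/
theorem stmt_7 {X : Type*} [NormedAddCommGroup X] [NormedSpace ℝ X]
    (A B : Set X) (hAne : A.Nonempty) (hBne : B.Nonempty) (hAB : A ∩ B = ∅)
    (a : ℕ → X) (b : ℕ → X) (ha : ∀ k, a k ∈ A) (hb : ∀ k, b k ∈ B)
    (hconv : Tendsto (fun k => ‖a k - b k‖) atTop (nhds (setDist A B))) :
    ∃ u v : ℕ → X, Tendsto u atTop (nhds (0 : X)) ∧ Tendsto v atTop (nhds (0 : X)) ∧
      ∀ k, ((fun x => x - a k - u k) '' A) ∩ ((fun x => x - b k - v k) '' B) = ∅ :=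
  stmt_7_general A B hAB a b ha hb hconv
end

section
/- Let X be a real normed linear space, A, B ⊆ X, a ∈ A, b ∈ B. Then: (1) the pair {A,B} is stationary relative to a and b if and only if for every ε > 0 there exist ρ ∈ (0, ε) and u ∈ X with (A − a − u) ∩ (B − b) ∩ (ρ𝔹) = ∅ and ‖u‖ < ερ; (2) the pair {A,B} is approximately stationary relative to a and b if and only if for every ε > 0 there exist ρ ∈ (0, ε), a' ∈ A ∩ B_ε(a), b' ∈ B ∩ B_ε(b) and u ∈ X with (A − a' − u) ∩ (B − b') ∩ (ρ𝔹) = ∅ and ‖u‖ < ερ. -/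
open Metric

variable {X : Type*} [NormedAddCommGroup X] [NormedSpace ℝ X]

/-- The pair {A,B} is extremal relative to the points `a ∈ A` and `b ∈ B`. -/
def ExtremalRel (A B : Set X) (a b : X) : Prop :=
  ∀ ε > (0 : ℝ), ∃ u v : X,
    ((fun x => x - a - u) '' A) ∩ ((fun x => x - b - v) '' B) = ∅ ∧
    max ‖u‖ ‖v‖ < ε

/-- The pair {A,B} is locally extremal relative to the points `a ∈ A` and `b ∈ B`. -/
def LocallyExtremalRel (A B : Set X) (a b : X) : Prop :=
  ∃ ρ > (0 : ℝ), ∀ ε > (0 : ℝ), ∃ u v : X,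
    ((fun x => x - a - u) '' A) ∩ ((fun x => x - b - v) '' B) ∩
      closedBall (0 : X) ρ = ∅ ∧
    max ‖u‖ ‖v‖ < ε

/-- The pair {A,B} is stationary relative to the points `a ∈ A` and `b ∈ B`. -/
def StationaryRel (A B : Set X) (a b : X) : Prop :=
  ∀ ε > (0 : ℝ), ∃ ρ : ℝ, 0 < ρ ∧ ρ < ε ∧ ∃ u v : X,
    ((fun x => x - a - u) '' A) ∩ ((fun x => x - b - v) '' B) ∩
      closedBall (0 : X) ρ = ∅ ∧
    max ‖u‖ ‖v‖ < ε * ρ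

/-- The pair {A,B} is approximately stationary relative to `a ∈ A` and `b ∈ B`. -/
def ApproxStationaryRel (A B : Set X) (a b : X) : Prop :=
  ∀ ε > (0 : ℝ), ∃ ρ : ℝ, 0 < ρ ∧ ρ < ε ∧
    ∃ a' ∈ A ∩ ball a ε, ∃ b' ∈ B ∩ ball b ε, ∃ u v : X,
      ((fun x => x - a' - u) '' A) ∩ ((fun x => x - b' - v) '' B) ∩
        closedBall (0 : X) ρ = ∅ ∧
      max ‖u‖ ‖v‖ < ε * ρ


lemma key_shift (A B : Set X) (a b : X) (ε : ℝ) (hε : 0 < ε) (ρ : ℝ) (hρ0 : 0 < ρ)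
    (hρε : ρ < min ε 1 / 4) (u v : X)
    (hemp : ((fun x => x - a - u) '' A) ∩ ((fun x => x - b - v) '' B) ∩
      closedBall (0 : X) ρ = ∅)
    (hmax : max ‖u‖ ‖v‖ < min ε 1 / 4 * ρ) :
    ∃ ρ' : ℝ, 0 < ρ' ∧ ρ' < ε ∧ ∃ u' : X,
      ((fun x => x - a - u') '' A) ∩ ((fun x => x - b) '' B) ∩
        closedBall (0 : X) ρ' = ∅ ∧ ‖u'‖ < ε * ρ' := by
  have hm0 : 0 < min ε 1 := lt_min hε one_pos
  have hmε : min ε 1 ≤ ε := min_le_left _ _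
  have hm1 : min ε 1 ≤ 1 := min_le_right _ _
  have hu : ‖u‖ < min ε 1 / 4 * ρ := (le_max_left _ _).trans_lt hmax
  have hv : ‖v‖ < min ε 1 / 4 * ρ := (le_max_right _ _).trans_lt hmax
  have hvρ : ‖v‖ < ρ := by nlinarith
  have hv0 := norm_nonneg v
  refine ⟨ρ - ‖v‖, by linarith, by linarith, u - v, ?_, ?_⟩
  · rw [Set.eq_empty_iff_forall_notMem]
    rintro z ⟨⟨⟨x, hx, hxz⟩, ⟨y, hy, hyz⟩⟩, hz⟩
    rw [mem_closedBall_zero_iff] at hz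
    refine Set.eq_empty_iff_forall_notMem.mp hemp (z - v) ⟨⟨⟨x, hx, ?_⟩, ⟨y, hy, ?_⟩⟩, ?_⟩
    · simp only at hxz ⊢; rw [← hxz]; abel
    · simp only at hyz ⊢; rw [← hyz]
    · rw [mem_closedBall_zero_iff]
      have := norm_sub_le z v
      linarith
  · have h1 := norm_sub_le u v
    have h2 := norm_nonneg v
    nlinarith

/-- Proposition 4.5 (stationarity part): it suffices to shift only one of the sets. -/
theorem stmt_11 (A B : Set X) (a : X) (ha : a ∈ A) (b : X) (hb : b ∈ B) :
    (StationaryRel A B a b ↔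
      ∀ ε > (0 : ℝ), ∃ ρ : ℝ, 0 < ρ ∧ ρ < ε ∧ ∃ u : X,
        ((fun x => x - a - u) '' A) ∩ ((fun x => x - b) '' B) ∩
          closedBall (0 : X) ρ = ∅ ∧ ‖u‖ < ε * ρ) ∧
    (ApproxStationaryRel A B a b ↔
      ∀ ε > (0 : ℝ), ∃ ρ : ℝ, 0 < ρ ∧ ρ < ε ∧
        ∃ a' ∈ A ∩ ball a ε, ∃ b' ∈ B ∩ ball b ε, ∃ u : X,
          ((fun x => x - a' - u) '' A) ∩ ((fun x => x - b') '' B) ∩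
            closedBall (0 : X) ρ = ∅ ∧ ‖u‖ < ε * ρ) := by
  constructor
  · constructor
    · intro h ε hε
      have hm0 : 0 < min ε 1 := lt_min hε one_pos
      obtain ⟨ρ, hρ0, hρε, u, v, hemp, hmax⟩ := h (min ε 1 / 4) (by linarith)
      exact key_shift A B a b ε hε ρ hρ0 hρε u v hemp hmax
    · intro h ε hε
      obtain ⟨ρ, hρ0, hρε, u, hemp, hu⟩ := h ε hε
      exact ⟨ρ, hρ0, hρε, u, 0, by simpa using hemp, by simpa using hu⟩
  · constructor
    · intro h ε hε
      have hm0 : 0 < min ε 1 := lt_min hε one_pos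
      obtain ⟨ρ, hρ0, hρε, a', ha', b', hb', u, v, hemp, hmax⟩ := h (min ε 1 / 4) (by linarith)
      have hball : ball a (min ε 1 / 4) ⊆ ball a ε := ball_subset_ball (by linarith [min_le_left ε 1])
      have hball' : ball b (min ε 1 / 4) ⊆ ball b ε := ball_subset_ball (by linarith [min_le_left ε 1])
      obtain ⟨ρ', h1, h2, u', h3, h4⟩ := key_shift A B a' b' ε hε ρ hρ0 hρε u v hemp hmax
      exact ⟨ρ', h1, h2, a', ⟨ha'.1, hball ha'.2⟩, b', ⟨hb'.1, hball' hb'.2⟩, u', h3, h4⟩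
    · intro h ε hε
      obtain ⟨ρ, hρ0, hρε, a', ha', b', hb', u, hemp, hu⟩ := h ε hε
      exact ⟨ρ, hρ0, hρε, a', ha', b', hb', u, 0, by simpa using hemp, by simpa using hu⟩
end

section
/- Let X be a real normed linear space, let A, B ⊆ X be closed, and let a ∈ A, b ∈ B. The pair {A,B} is approximately stationary relative to a and b if and only if for every ε > 0, every δ > 0 and all points a' ∈ A ∩ B_ε(a), b' ∈ B ∩ B_ε(b), there exist ρ ∈ (0, δ), a'' ∈ A ∩ B_ε(a'), b'' ∈ B ∩ B_ε(b') and u, v ∈ X such that (A − a'' − u) ∩ (B − b'' − v) ∩ (ρ𝔹) = ∅ and max{‖u‖, ‖v‖} < ερ. -/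
open Metric

variable {X : Type*} [NormedAddCommGroup X] [NormedSpace ℝ X]

/-- Proposition 4.3: stability of relative approximate stationarity. -/
theorem stmt_14 (A B : Set X) (hA : IsClosed A) (hB : IsClosed B)
    (a : X) (ha : a ∈ A) (b : X) (hb : b ∈ B) :
    ApproxStationaryRel A B a b ↔
      ∀ ε > (0 : ℝ), ∀ δ > (0 : ℝ),
        ∀ a' ∈ A ∩ ball a ε, ∀ b' ∈ B ∩ ball b ε,
          ∃ ρ : ℝ, 0 < ρ ∧ ρ < δ ∧
            ∃ a'' ∈ A ∩ ball a' ε, ∃ b'' ∈ B ∩ ball b' ε, ∃ u v : X,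
              ((fun x => x - a'' - u) '' A) ∩ ((fun x => x - b'' - v) '' B) ∩
                closedBall (0 : X) ρ = ∅ ∧
              max ‖u‖ ‖v‖ < ε * ρ := by
  constructor
  · intro h ε hε δ hδ a' ha' b' hb'
    obtain ⟨ha'A, ha'ball⟩ := ha'
    obtain ⟨hb'B, hb'ball⟩ := hb'
    rw [mem_ball] at ha'ball hb'ball
    set ε' := min (min (ε - dist a' a) (ε - dist b' b)) (min δ ε) / 2 with hε'def
    have hε'pos : 0 < ε' := by
      apply div_pos _ two_pos
      exact lt_min (lt_min (by linarith) (by linarith)) (lt_min hδ hε)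
    obtain ⟨ρ, hρ0, hρε', a₁, ⟨ha₁A, ha₁⟩, b₁, ⟨hb₁B, hb₁⟩, u, v, hemp, huv⟩ :=
      h ε' hε'pos
    rw [mem_ball] at ha₁ hb₁
    have h1 : ε' ≤ (ε - dist a' a) / 2 := by
      apply div_le_div_of_nonneg_right _ two_pos.le
      exact (min_le_left _ _).trans (min_le_left _ _)
    have h2 : ε' ≤ (ε - dist b' b) / 2 := by
      apply div_le_div_of_nonneg_right _ two_pos.le
      exact (min_le_left _ _).trans (min_le_right _ _)
    have h3 : ε' ≤ δ / 2 := by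
      apply div_le_div_of_nonneg_right _ two_pos.le
      exact (min_le_right _ _).trans (min_le_left _ _)
    have h4 : ε' ≤ ε / 2 := by
      apply div_le_div_of_nonneg_right _ two_pos.le
      exact (min_le_right _ _).trans (min_le_right _ _)
    refine ⟨ρ, hρ0, by linarith, a₁, ⟨ha₁A, ?_⟩, b₁, ⟨hb₁B, ?_⟩, u, v, hemp, ?_⟩
    · rw [mem_ball]
      calc dist a₁ a' ≤ dist a₁ a + dist a a' := dist_triangle _ _ _
        _ = dist a₁ a + dist a' a := by rw [dist_comm a a']
        _ < ε := by linarith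
    · rw [mem_ball]
      calc dist b₁ b' ≤ dist b₁ b + dist b b' := dist_triangle _ _ _
        _ = dist b₁ b + dist b' b := by rw [dist_comm b b']
        _ < ε := by linarith
    · calc max ‖u‖ ‖v‖ < ε' * ρ := huv
        _ ≤ (ε / 2) * ρ := mul_le_mul_of_nonneg_right h4 hρ0.le
        _ < ε * ρ := by nlinarith
  · intro h ε hε
    obtain ⟨ρ, hρ0, hρδ, a'', ha'', b'', hb'', u, v, hemp, huv⟩ :=
      h ε hε ε hε a ⟨ha, mem_ball_self hε⟩ b ⟨hb, mem_ball_self hε⟩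
    exact ⟨ρ, hρ0, hρδ, a'', ha'', b'', hb'', u, v, hemp, huv⟩
end

section
/- Let X be a real normed linear space, A, B ⊆ X, a ∈ A, b ∈ B. The pair {A,B} is approximately stationary relative to a and b if and only if for every ε > 0 there exist y ∈ B_ε(a), z ∈ B_ε(b) and x ∈ ε𝔹 such that max{d(x, A − y), d(x, B − z)} < ε · d(x, (A − y) ∩ (B − z)), where distances are understood as extended distances, with the distance from a point to the empty set equal to +∞. -/
/-!
Write `y = a' + u`, `z = b' + v`. If `(A - y) ∩ (B - z)` misses `ρ𝔹`, its distance from `0` is at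
least `ρ`, while `d(0, A - y) ≤ ‖u‖` and `d(0, B - z) ≤ ‖v‖`; so approximate stationarity gives the
metric condition at `x = 0`. Conversely, from `x, y, z` pick `a' ∈ A`, `b' ∈ B` nearly realising
`d(x, A - y)` and `d(x, B - z)` and put `u = y + x - a'`, `v = z + x - b'`: then
`(A - a' - u) ∩ (B - b' - v)` is `(A - y) ∩ (B - z)` shifted by `-x`, so it misses `ρ𝔹` for every
`ρ < d(x, (A - y) ∩ (B - z))`. Capping `ρ` by `min ε 1` keeps `a'`, `b'` within `ε` of `a`, `b`.
-/

open Metric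

variable {X : Type*} [NormedAddCommGroup X] [NormedSpace ℝ X]

section Translation

variable {E : Type*} [SeminormedAddCommGroup E]

lemma infEDist_image_sub_right (x y : E) (s : Set E) :
    infEDist x ((fun w => w - y) '' s) = infEDist (y + x) s := by
  simpa using infEDist_image (IsometryEquiv.subRight y).isometry (x := y + x) (t := s)

lemma dist_add_le_dist_add_norm (y x a : E) : dist (y + x) a ≤ dist y a + ‖x‖ := by
  simpa [add_comm] using dist_triangle (y + x) y a

lemma image_sub_sub_of_add_eq {p u q x : E} (h : p + u = q + x) (s : Set E) :
    (fun w => w - p - u) '' s = (fun w => w - x) '' ((fun w => w - q) '' s) := by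
  rw [Set.image_image]
  congr 1
  funext w
  rw [sub_sub, h, ← sub_sub]

lemma ofReal_le_infEDist_of_inter_closedBall_eq_empty {s : Set E} {x : E} {ρ : ℝ}
    (h : s ∩ closedBall x ρ = ∅) : ENNReal.ofReal ρ ≤ infEDist x s := by
  refine le_infEDist.2 fun w hw => ?_
  have hwρ : w ∉ closedBall x ρ := fun hw' => h.subset ⟨hw, hw'⟩
  rw [mem_closedBall, not_le] at hwρ
  rw [edist_dist, dist_comm]
  exact ENNReal.ofReal_le_ofReal hwρ.le

lemma image_sub_inter_closedBall_eq_empty_of_lt_infEDist {s : Set E} {x : E} {ρ : ℝ}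
    (h : ENNReal.ofReal ρ < infEDist x s) :
    (fun w => w - x) '' s ∩ closedBall 0 ρ = ∅ := by
  refine Set.eq_empty_of_forall_notMem ?_
  rintro _ ⟨⟨w, hw, rfl⟩, hwρ⟩
  rw [mem_closedBall, dist_zero_right, ← dist_eq_norm, dist_comm] at hwρ
  have := (infEDist_le_edist_of_mem hw).trans (edist_dist x w ▸ ENNReal.ofReal_le_ofReal hwρ)
  exact h.not_ge this

end Translation

section Characterization

variable {E : Type*} [NormedAddCommGroup E]

def DistApproxStationaryRel (A B : Set E) (a b : E) : Prop :=
  ∀ ε > (0 : ℝ), ∃ y ∈ ball a ε, ∃ z ∈ ball b ε, ∃ x ∈ closedBall (0 : E) ε,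
    max (infEDist x ((fun w => w - y) '' A)) (infEDist x ((fun w => w - z) '' B)) <
      ENNReal.ofReal ε * infEDist x (((fun w => w - y) '' A) ∩ ((fun w => w - z) '' B))

variable {A B : Set E} {a b : E}

theorem ApproxStationaryRel.distApproxStationaryRel (h : ApproxStationaryRel A B a b) :
    DistApproxStationaryRel A B a b := by
  intro ε hε
  set δ := min (ε / 2) 1
  have hδ : 0 < δ := by positivity
  obtain ⟨ρ, hρ, hρδ, a', ⟨ha', ha'a⟩, b', ⟨hb', hb'b⟩, u, v, hempty, huv⟩ := h δ hδ
  have hδε : δ ≤ ε / 2 := min_le_left _ _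
  have hδρ : δ * ρ < δ := mul_lt_of_lt_one_right hδ (hρδ.trans_le (min_le_right _ _))
  have hnear {c c' w : E} (hc : dist c' c < δ) (hw : ‖w‖ < δ * ρ) : c' + w ∈ ball c ε :=
    (dist_add_le_dist_add_norm c' w c).trans_lt (by linarith)
  refine ⟨a' + u, hnear ha'a ((le_max_left _ _).trans_lt huv), b' + v,
    hnear hb'b ((le_max_right _ _).trans_lt huv), 0, mem_closedBall_self hε.le, ?_⟩
  have hρ_le : ENNReal.ofReal ρ ≤
      infEDist 0 ((fun w => w - (a' + u)) '' A ∩ (fun w => w - (b' + v)) '' B) := by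
    simp only [← sub_sub]
    exact ofReal_le_infEDist_of_inter_closedBall_eq_empty hempty
  rw [infEDist_image_sub_right, infEDist_image_sub_right, add_zero, add_zero]
  calc max (infEDist (a' + u) A) (infEDist (b' + v) B)
      ≤ max (edist (a' + u) a') (edist (b' + v) b') :=
        max_le_max (infEDist_le_edist_of_mem ha') (infEDist_le_edist_of_mem hb')
    _ = ENNReal.ofReal (max ‖u‖ ‖v‖) := by
        simp only [edist_dist, dist_self_add_left, ENNReal.ofReal_max]
    _ < ENNReal.ofReal (δ * ρ) := (ENNReal.ofReal_lt_ofReal_iff (by positivity)).2 huv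
    _ = ENNReal.ofReal δ * ENNReal.ofReal ρ := ENNReal.ofReal_mul hδ.le
    _ ≤ _ := mul_le_mul' (ENNReal.ofReal_le_ofReal (by linarith)) hρ_le

lemma exists_inter_closedBall_eq_empty_of_infEDist_lt {ε ρ : ℝ} {x y z : E}
    (hρ : ENNReal.ofReal ρ < infEDist x ((fun w => w - y) '' A ∩ (fun w => w - z) '' B))
    (hA : infEDist (y + x) A < ENNReal.ofReal (ε * ρ))
    (hB : infEDist (z + x) B < ENNReal.ofReal (ε * ρ))
    (hya : dist (y + x) a + ε * ρ ≤ ε) (hzb : dist (z + x) b + ε * ρ ≤ ε) :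
    ∃ a' ∈ A ∩ ball a ε, ∃ b' ∈ B ∩ ball b ε, ∃ u v : E,
      (fun w => w - a' - u) '' A ∩ (fun w => w - b' - v) '' B ∩ closedBall 0 ρ = ∅ ∧
      max ‖u‖ ‖v‖ < ε * ρ := by
  obtain ⟨a', ha', hya'⟩ := infEDist_lt_iff.1 hA
  obtain ⟨b', hb', hzb'⟩ := infEDist_lt_iff.1 hB
  rw [edist_lt_ofReal] at hya' hzb'
  have hball {p q q' : E} (hp : dist q' p < ε * ρ) (hq : dist q' q + ε * ρ ≤ ε) :
      p ∈ ball q ε :=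
    (dist_triangle_left p q q').trans_lt (by linarith)
  refine ⟨a', ⟨ha', hball hya' hya⟩, b', ⟨hb', hball hzb' hzb⟩, y + x - a', z + x - b', ?_,
    max_lt (dist_eq_norm (y + x) a' ▸ hya') (dist_eq_norm (z + x) b' ▸ hzb')⟩
  rw [image_sub_sub_of_add_eq (add_sub_cancel _ _), image_sub_sub_of_add_eq (add_sub_cancel _ _),
    ← Set.image_inter sub_left_injective]
  exact image_sub_inter_closedBall_eq_empty_of_lt_infEDist hρ

theorem DistApproxStationaryRel.approxStationaryRel (h : DistApproxStationaryRel A B a b)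
    (ha : a ∈ A) (hb : b ∈ B) : ApproxStationaryRel A B a b := by
  intro ε hε
  set c := min ε 1
  have hc : 0 < c := by positivity
  set δ := ε * c / 4 with hδ
  obtain ⟨y, hy, z, hz, x, hx, hlt⟩ := h δ (by positivity)
  rw [mem_ball] at hy hz
  rw [mem_closedBall, dist_zero_right] at hx
  set r := infEDist x ((fun w => w - y) '' A ∩ (fun w => w - z) '' B)
  have hr : r ≠ 0 := by
    rintro hr
    rw [hr, mul_zero] at hlt
    exact ENNReal.not_lt_zero hlt
  -- `ρ = min(r, c) / 2`
  set R := (min r (ENNReal.ofReal c)).toReal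
  have hR_top : min r (ENNReal.ofReal c) ≠ ⊤ :=
    ne_top_of_le_ne_top ENNReal.ofReal_ne_top (min_le_right _ _)
  have hR : ENNReal.ofReal R = min r (ENNReal.ofReal c) := ENNReal.ofReal_toReal hR_top
  have hR0 : 0 < R := ENNReal.toReal_pos (by simp [hr, hc]) hR_top
  have hRc : R ≤ c := by
    rw [← ENNReal.ofReal_le_ofReal_iff hc.le, hR]
    exact min_le_right _ _
  have hRr : ENNReal.ofReal (R / 2) < r := calc
    ENNReal.ofReal (R / 2) < ENNReal.ofReal R := ENNReal.ofReal_lt_ofReal_iff'.2 ⟨by linarith, hR0⟩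
    _ ≤ r := hR ▸ min_le_left _ _
  have hyx : dist (y + x) a < 2 * δ := (dist_add_le_dist_add_norm y x a).trans_lt (by linarith)
  have hzx : dist (z + x) b < 2 * δ := (dist_add_le_dist_add_norm z x b).trans_lt (by linarith)
  have hM : max (infEDist (y + x) A) (infEDist (z + x) B) < ENNReal.ofReal (ε * (R / 2)) := by
    rw [← infEDist_image_sub_right, ← infEDist_image_sub_right,
      show ε * (R / 2) = ε / 2 * R by ring, ENNReal.ofReal_mul (by positivity), hR, mul_min]
    refine lt_min (hlt.trans_le (mul_le_mul' (ENNReal.ofReal_le_ofReal ?_) le_rfl)) ?_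
    · nlinarith [min_le_right ε 1]
    · rw [← ENNReal.ofReal_mul (by positivity), infEDist_image_sub_right, infEDist_image_sub_right]
      refine max_lt ((infEDist_le_edist_of_mem ha).trans_lt ?_)
        ((infEDist_le_edist_of_mem hb).trans_lt ?_) <;>
      rw [edist_lt_ofReal] <;> linarith
  have hεR : ε * (R / 2) + 2 * δ ≤ ε := by
    nlinarith [mul_le_mul_of_nonneg_left hRc hε.le, min_le_right ε 1]
  exact ⟨R / 2, half_pos hR0, by linarith [min_le_left ε 1],
    exists_inter_closedBall_eq_empty_of_infEDist_lt hRr ((le_max_left _ _).trans_lt hM)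
      ((le_max_right _ _).trans_lt hM) (by linarith) (by linarith)⟩

end Characterization

/-- Metric characterization of relative approximate stationarity (extended distances,
with the distance to the empty set equal to `∞`). -/
theorem stmt_15 (A B : Set X) (a : X) (ha : a ∈ A) (b : X) (hb : b ∈ B) :
    ApproxStationaryRel A B a b ↔
      ∀ ε > (0 : ℝ), ∃ y ∈ ball a ε, ∃ z ∈ ball b ε, ∃ x ∈ closedBall (0 : X) ε,
        max (EMetric.infEdist x ((fun w => w - y) '' A))
            (EMetric.infEdist x ((fun w => w - z) '' B)) <
          ENNReal.ofReal ε *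
            EMetric.infEdist x
              (((fun w => w - y) '' A) ∩ ((fun w => w - z) '' B)) :=
  ⟨ApproxStationaryRel.distApproxStationaryRel,
    fun h => DistApproxStationaryRel.approxStationaryRel h ha hb⟩
end

section
/- Let X be a real normed linear space, A, B ⊆ X, a ∈ A, b ∈ B. The pair {A,B} is extremal relative to a and b if and only if the point (a,b) belongs to the boundary (in X × X equipped with the maximum norm) of the set {(y,z) ∈ X × X : (A − y) ∩ (B − z) ≠ ∅}. -/
open Metric

variable {X : Type*} [NormedAddCommGroup X] [NormedSpace ℝ X]

/-- Proposition 4.7(i): relative extremality is equivalent to `(a,b)` being a boundary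
point of the domain of the mapping `(y,z) ↦ (A − y) ∩ (B − z)` (with `X × X` carrying
the maximum norm). -/
theorem stmt_16 (A B : Set X) (a : X) (ha : a ∈ A) (b : X) (hb : b ∈ B) :
    ExtremalRel A B a b ↔
      (a, b) ∈ frontier {p : X × X |
        (((fun x => x - p.1) '' A) ∩ ((fun x => x - p.2) '' B)).Nonempty} := by

  set S : Set (X × X) := {p : X × X |
      (((fun x => x - p.1) '' A) ∩ ((fun x => x - p.2) '' B)).Nonempty} with hS
  have hmem : (a, b) ∈ S := ⟨0, ⟨a, ha, by simp⟩, ⟨b, hb, by simp⟩⟩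
  rw [frontier_eq_closure_inter_closure]
  constructor
  · intro h
    refine ⟨subset_closure hmem, ?_⟩
    rw [Metric.mem_closure_iff]
    intro ε hε
    obtain ⟨u, v, hempty, hlt⟩ := h ε hε
    refine ⟨(a + u, b + v), ?_, ?_⟩
    · simp only [hS, Set.mem_compl_iff, Set.mem_setOf_eq, Set.not_nonempty_iff_eq_empty]
      simp only [sub_sub] at hempty
      exact hempty
    · simpa [Prod.dist_eq, dist_self_add_right] using hlt
  · rintro ⟨-, h⟩
    intro ε hε
    rw [Metric.mem_closure_iff] at h
    obtain ⟨q, hq, hd⟩ := h ε hε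
    refine ⟨q.1 - a, q.2 - b, ?_, ?_⟩
    · simp only [hS, Set.mem_compl_iff, Set.mem_setOf_eq,
        Set.not_nonempty_iff_eq_empty] at hq
      have e1 : (fun x => x - a - (q.1 - a)) = fun x : X => x - q.1 := by
        funext x; abel
      have e2 : (fun x => x - b - (q.2 - b)) = fun x : X => x - q.2 := by
        funext x; abel
      rw [e1, e2]; exact hq
    · rw [Prod.dist_eq, dist_eq_norm', dist_eq_norm'] at hd; exact hd
end

section
/- Let X be a real normed linear space, A, B ⊆ X, a ∈ A, b ∈ B. Set Ã := A × B and B̃ := {(x,x) : x ∈ X} in the product space X × X equipped with the maximum norm. Then the pair {A,B} is extremal relative to a and b if and only if the point (a,b) belongs to the boundary of the Minkowski sum à + B̃. -/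
open Metric

variable {X : Type*} [NormedAddCommGroup X] [NormedSpace ℝ X]

open Pointwise in
/-- Proposition 4.8(i): relative extremality is equivalent to `(a,b)` belonging to the
boundary of the Minkowski sum `A × B + Δ`, where `Δ` is the diagonal of `X × X`
(with `X × X` carrying the maximum norm). -/
theorem stmt_18 (A B : Set X) (a : X) (ha : a ∈ A) (b : X) (hb : b ∈ B) :
    ExtremalRel A B a b ↔
      (a, b) ∈ frontier ((A ×ˢ B) + {p : X × X | ∃ x : X, p = (x, x)}) := by
  set S := (A ×ˢ B) + {p : X × X | ∃ x : X, p = (x, x)} with hSdef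
  have hmem : ∀ p q : X, (p, q) ∈ S ↔ ∃ x : X, p - x ∈ A ∧ q - x ∈ B := by
    intro p q
    constructor
    · rintro ⟨⟨a', b'⟩, ⟨ha', hb'⟩, ⟨_, ⟨x, rfl⟩, h⟩⟩
      simp only [Prod.mk_add_mk, Prod.mk.injEq] at h
      exact ⟨x, by rw [← h.1]; simpa, by rw [← h.2]; simpa⟩
    · rintro ⟨x, hA, hB⟩
      exact ⟨(p - x, q - x), ⟨hA, hB⟩, (x, x), ⟨x, rfl⟩, by simp⟩
  have hS : (a, b) ∈ S := (hmem a b).2 ⟨0, by simpa, by simpa⟩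
  rw [frontier, Set.mem_diff]
  constructor
  · intro hext
    refine ⟨subset_closure hS, fun hint => ?_⟩
    obtain ⟨ε, hε, hsub⟩ := Metric.mem_nhds_iff.1 (mem_interior_iff_mem_nhds.1 hint)
    obtain ⟨u, v, hempty, huv⟩ := hext ε hε
    have hball : (a + u, b + v) ∈ ball (a, b) ε := by
      rw [mem_ball, Prod.dist_eq]
      simpa [dist_eq_norm] using huv
    obtain ⟨x, hxA, hxB⟩ := (hmem _ _).1 (hsub hball)
    have : (-x) ∈ ((fun x => x - a - u) '' A) ∩ ((fun x => x - b - v) '' B) :=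
      ⟨⟨a + u - x, hxA, by abel⟩, ⟨b + v - x, hxB, by abel⟩⟩
    rw [hempty] at this
    exact this
  · rintro ⟨-, hnint⟩ ε hε
    have : ¬ ball (a, b) ε ⊆ S := fun h =>
      hnint (mem_interior_iff_mem_nhds.2 (Metric.mem_nhds_iff.2 ⟨ε, hε, h⟩))
    obtain ⟨⟨p, q⟩, hball, hnS⟩ := Set.not_subset.1 this
    refine ⟨p - a, q - b, ?_, ?_⟩
    · rw [Set.eq_empty_iff_forall_notMem]
      rintro z ⟨⟨a', ha', hza⟩, ⟨b', hb', hzb⟩⟩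
      exact hnS ((hmem p q).2 ⟨-z, by rw [← hza]; simpa using ha', by rw [← hzb]; simpa using hb'⟩)
    · rw [mem_ball, Prod.dist_eq] at hball
      simpa [dist_eq_norm] using hball
end

section
/- Let X be a real normed linear space, A, B ⊆ X, a ∈ A, b ∈ B. The pair {A,B} is extremal relative to a and b if and only if 0 belongs to the boundary of the set (A − a) − (B − b) = {x − y : x ∈ A − a, y ∈ B − b}; equivalently, if and only if a − b belongs to the boundary of the set A − B := {x − y : x ∈ A, y ∈ B}. -/
open Metric

variable {X : Type*} [NormedAddCommGroup X] [NormedSpace ℝ X]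

/-! `{A, B}` is extremal at `(a, b)` iff arbitrarily small translations `u`, `v` separate
`A - a` and `B - b`, i.e. iff arbitrarily small vectors `u - v` lie outside the difference set
`D = (A - a) - (B - b)`. So extremality says `0 ∈ closure Dᶜ`; as `0 ∈ D`, this is
`0 ∈ frontier D`.
Finally `D` is the translate of `A - B` by `-(a - b)`. -/

open Pointwise

section AddCommGroup

variable {G : Type*} [AddCommGroup G]

theorem image_sub_inter_image_sub_eq_empty_iff (A B : Set G) (a b u v : G) :
    (fun x => x - a - u) '' A ∩ (fun x => x - b - v) '' B = ∅ ↔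
      u - v ∉ (fun x => x - a) '' A - (fun x => x - b) '' B := by
  rw [Set.eq_empty_iff_forall_notMem]
  constructor
  · rintro h ⟨_, ⟨x, hx, rfl⟩, _, ⟨y, hy, rfl⟩, hxy⟩
    exact h (x - a - u) ⟨⟨x, hx, rfl⟩, y, hy, by linear_combination (norm := module) -hxy⟩
  · rintro h _ ⟨⟨x, hx, rfl⟩, y, hy, hxy⟩
    exact h ⟨x - a, ⟨x, hx, rfl⟩, y - b, ⟨y, hy, rfl⟩,
      by linear_combination (norm := module) -hxy⟩

theorem image_sub_const_sub_image_sub_const (A B : Set G) (a b : G) :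
    (fun x => x - a) '' A - (fun x => x - b) '' B = (fun z => z - (a - b)) '' (A - B) := by
  ext z
  simp only [Set.mem_sub, Set.mem_image]
  constructor
  · rintro ⟨_, ⟨x, hx, rfl⟩, _, ⟨y, hy, rfl⟩, rfl⟩
    exact ⟨x - y, ⟨x, hx, y, hy, rfl⟩, by abel⟩
  · rintro ⟨_, ⟨x, hx, y, hy, rfl⟩, rfl⟩
    exact ⟨x - a, ⟨x, hx, rfl⟩, y - b, ⟨y, hy, rfl⟩, by abel⟩

end AddCommGroup

theorem zero_mem_frontier_image_sub_const_iff {G : Type*} [AddGroup G] [TopologicalSpace G]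
    [IsTopologicalAddGroup G] (S : Set G) (c : G) :
    (0 : G) ∈ frontier ((fun x => x - c) '' S) ↔ c ∈ frontier S := by
  change (0 : G) ∈ frontier (Homeomorph.subRight c '' S) ↔ _
  rw [← Homeomorph.image_frontier]
  simp [sub_eq_zero]

theorem extremalRel_iff_zero_mem_closure_compl {E : Type*} [NormedAddCommGroup E]
    (A B : Set E) (a b : E) :
    ExtremalRel A B a b ↔
      (0 : E) ∈ closure ((fun x => x - a) '' A - (fun x => x - b) '' B)ᶜ := by
  simp only [ExtremalRel, Metric.mem_closure_iff, dist_zero_left, Set.mem_compl_iff,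
    image_sub_inter_image_sub_eq_empty_iff]
  constructor
  · intro h ε hε
    obtain ⟨u, v, huv, hlt⟩ := h (ε / 2) (half_pos hε)
    refine ⟨u - v, huv, (norm_sub_le u v).trans_lt ?_⟩
    have hu : ‖u‖ < ε / 2 := (le_max_left _ _).trans_lt hlt
    have hv : ‖v‖ < ε / 2 := (le_max_right _ _).trans_lt hlt
    linarith
  · intro h ε hε
    obtain ⟨w, hw, hlt⟩ := h ε hε
    exact ⟨w, 0, by simpa using hw, by simpa using hlt⟩

open Pointwise in
/-- Relative extremality is equivalent to `0 ∈ bd((A − a) − (B − b))`, equivalently to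
`a − b ∈ bd(A − B)` (Minkowski differences of sets). -/
theorem stmt_19 (A B : Set X) (a : X) (ha : a ∈ A) (b : X) (hb : b ∈ B) :
    (ExtremalRel A B a b ↔
      (0 : X) ∈ frontier (((fun x => x - a) '' A) - ((fun x => x - b) '' B))) ∧
    (ExtremalRel A B a b ↔ a - b ∈ frontier (A - B)) := by
  have h_zero_mem : (0 : X) ∈ (fun x => x - a) '' A - (fun x => x - b) '' B :=
    ⟨a - a, ⟨a, ha, rfl⟩, b - b, ⟨b, hb, rfl⟩, by simp⟩
  have h_first : ExtremalRel A B a b ↔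
      (0 : X) ∈ frontier ((fun x => x - a) '' A - (fun x => x - b) '' B) := by
    rw [extremalRel_iff_zero_mem_closure_compl, frontier_eq_closure_inter_closure]
    exact ⟨fun h => ⟨subset_closure h_zero_mem, h⟩, And.right⟩
  refine ⟨h_first, h_first.trans ?_⟩
  rw [image_sub_const_sub_image_sub_const, zero_mem_frontier_image_sub_const_iff]
end
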